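/- arXiv:1605.04470 — 6 statements merged into one kernel-verified Lean document; each statement's English description precedes it below -/
import Mathlib

section
/- For any finite simple undirected graph G on n vertices in which every vertex has positive degree, the average over vertices of the mean degree of their neighbors is at least the average degree: (1/n) · Σ_i ( Σ_{j adjacent to i} d_j ) / d_i ≥ (1/n) · Σ_i d_i. Moreover, the inequality is strict if and only if there exist two adjacent vertices with different degrees. -/
open Finset

/-!
Pairing each ordered edge `(i, j)` with its reverse turns `∑ᵢ ∑_{j ~ i} (d_j / d_i - 1)`,
which is the difference of the two sides, into half of
`∑ᵢ ∑_{j ~ i} (d_j / d_i + d_i / d_j - 2) = ∑ᵢ ∑_{j ~ i} (d_i - d_j)² / (d_i d_j)`.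
Every term is nonnegative and vanishes exactly when `d_i = d_j`. The same computation works
with `d` replaced by any positive vertex weight in the neighbour averages.
-/

lemma div_add_div_sub_two_eq_sq_div {a b : ℝ} (ha : a ≠ 0) (hb : b ≠ 0) :
    b / a + a / b - 2 = (a - b) ^ 2 / (a * b) := by
  field_simp
  ring

namespace SimpleGraph

variable {V : Type*} [Fintype V] (G : SimpleGraph V) [DecidableRel G.Adj]

lemma sum_sum_neighborFinset_comm {M : Type*} [AddCommMonoid M] (f : V → V → M) :
    ∑ i, ∑ j ∈ G.neighborFinset i, f i j = ∑ i, ∑ j ∈ G.neighborFinset i, f j i := by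
  simp_rw [neighborFinset_eq_filter, sum_filter]
  rw [sum_comm]
  simp_rw [G.adj_comm]

variable {G} {w : V → ℝ}

lemma two_mul_sum_sum_neighborFinset_div_sub_one (hw : ∀ i, w i ≠ 0) :
    2 * ∑ i, ∑ j ∈ G.neighborFinset i, (w j / w i - 1)
      = ∑ i, ∑ j ∈ G.neighborFinset i, (w i - w j) ^ 2 / (w i * w j) := by
  rw [two_mul]
  nth_rewrite 2 [G.sum_sum_neighborFinset_comm]
  rw [← sum_add_distrib]
  refine sum_congr rfl fun i _ => ?_
  rw [← sum_add_distrib]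
  refine sum_congr rfl fun j _ => ?_
  rw [← div_add_div_sub_two_eq_sq_div (hw i) (hw j)]
  ring

lemma sum_sum_neighborFinset_div_sub_one_nonneg (hw : ∀ i, 0 < w i) :
    0 ≤ ∑ i, ∑ j ∈ G.neighborFinset i, (w j / w i - 1) := by
  have hsq : 0 ≤ ∑ i, ∑ j ∈ G.neighborFinset i, (w i - w j) ^ 2 / (w i * w j) :=
    sum_nonneg fun i _ => sum_nonneg fun j _ =>
      div_nonneg (sq_nonneg _) (mul_pos (hw i) (hw j)).le
  linarith [two_mul_sum_sum_neighborFinset_div_sub_one (G := G) fun i => (hw i).ne']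

lemma sum_sum_neighborFinset_div_sub_one_pos_iff (hw : ∀ i, 0 < w i) :
    0 < ∑ i, ∑ j ∈ G.neighborFinset i, (w j / w i - 1) ↔ ∃ i j, G.Adj i j ∧ w i ≠ w j := by
  have hterm : ∀ i j, 0 ≤ (w i - w j) ^ 2 / (w i * w j) := fun i j =>
    div_nonneg (sq_nonneg _) (mul_pos (hw i) (hw j)).le
  rw [← mul_pos_iff_of_pos_left two_pos,
    two_mul_sum_sum_neighborFinset_div_sub_one fun i => (hw i).ne',
    sum_pos_iff_of_nonneg fun i _ => sum_nonneg fun j _ => hterm i j]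
  simp_rw [sum_pos_iff_of_nonneg fun j _ => hterm _ j]
  simp [div_pos_iff_of_pos_right (mul_pos (hw _) (hw _)), sq_pos_iff, sub_ne_zero]

lemma sum_neighborFinset_sum_div_sub_sum_degree :
    ∑ i, (∑ j ∈ G.neighborFinset i, w j) / w i - ∑ i, (G.degree i : ℝ)
      = ∑ i, ∑ j ∈ G.neighborFinset i, (w j / w i - 1) := by
  rw [← sum_sub_distrib]
  refine sum_congr rfl fun i _ => ?_
  rw [sum_sub_distrib, ← sum_div, sum_const, card_neighborFinset_eq_degree, nsmul_one]

theorem sum_degree_le_sum_neighborFinset_sum_div (hw : ∀ i, 0 < w i) :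
    ∑ i, (G.degree i : ℝ) ≤ ∑ i, (∑ j ∈ G.neighborFinset i, w j) / w i := by
  have := sum_neighborFinset_sum_div_sub_sum_degree (G := G) (w := w)
  linarith [sum_sum_neighborFinset_div_sub_one_nonneg (G := G) hw]

theorem sum_degree_lt_sum_neighborFinset_sum_div_iff (hw : ∀ i, 0 < w i) :
    ∑ i, (G.degree i : ℝ) < ∑ i, (∑ j ∈ G.neighborFinset i, w j) / w i ↔
      ∃ i j, G.Adj i j ∧ w i ≠ w j := by
  rw [← sub_pos, sum_neighborFinset_sum_div_sub_sum_degree,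
    sum_sum_neighborFinset_div_sub_one_pos_iff hw]

end SimpleGraph

/-- The friendship paradox for general networks: the average over vertices of the mean
degree of their neighbors is at least the average degree, with strict inequality iff
two adjacent vertices have different degrees. -/
theorem friendship_paradox_general (n : ℕ) (G : SimpleGraph (Fin n)) [DecidableRel G.Adj]
    (hd : ∀ i, 0 < G.degree i) :
    ((1 : ℝ) / n) * ∑ i, (∑ j ∈ G.neighborFinset i, (G.degree j : ℝ)) / (G.degree i : ℝ)
      ≥ ((1 : ℝ) / n) * ∑ i, (G.degree i : ℝ)
    ∧ (((1 : ℝ) / n) * ∑ i, (∑ j ∈ G.neighborFinset i, (G.degree j : ℝ)) / (G.degree i : ℝ)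
        > ((1 : ℝ) / n) * ∑ i, (G.degree i : ℝ)
      ↔ ∃ i j, G.Adj i j ∧ G.degree i ≠ G.degree j) := by
  have hw : ∀ i, 0 < (G.degree i : ℝ) := fun i => Nat.cast_pos.mpr (hd i)
  rcases n.eq_zero_or_pos with rfl | hn
  · simp
  have hscale : (0 : ℝ) < 1 / n := by positivity
  refine ⟨mul_le_mul_of_nonneg_left (G.sum_degree_le_sum_neighborFinset_sum_div hw) hscale.le, ?_⟩
  rw [gt_iff_lt, mul_lt_mul_iff_right₀ hscale, G.sum_degree_lt_sum_neighborFinset_sum_div_iff hw]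
  simp only [ne_eq, Nat.cast_inj]
end

section
/- In the linear-quadratic network game, the unique symmetric equilibrium action function x(θ, d) = θ/c + a·d·Ẽ[θ]/(c·(c − a·Ẽ[d])) satisfies the best-response fixed-point equation x(θ_i, d_i) = θ_i/c + (a·d_i/c)·Ẽ[x(θ, d)], where Ẽ[x(θ, d)] denotes the expectation of x over the joint neighbor distribution with independent marginals on θ and d. -/
/-!
Under independent marginals the neighbor expectation of the candidate action
`θ / c + k d` splits as `Ẽ[θ] / c + k Ẽ[d]`. With `k = a Ẽ[θ] / (c (c - a Ẽ[d]))` this is the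
geometric-series value `Ẽ[θ] / (c - a Ẽ[d])`, and `(a d / c)` times it is exactly `k d`.
-/

open Finset

theorem Finset.sum_sum_mul_mul_add {α β R : Type*} [CommSemiring R] (s : Finset α)
    (t : Finset β) (u f : α → R) (v g : β → R) :
    ∑ x ∈ s, ∑ y ∈ t, u x * v y * (f x + g y)
      = (∑ y ∈ t, v y) * ∑ x ∈ s, u x * f x + (∑ x ∈ s, u x) * ∑ y ∈ t, v y * g y := by
  rw [mul_comm (∑ y ∈ t, v y), sum_mul_sum, sum_mul_sum, ← sum_add_distrib]
  refine sum_congr rfl fun x _ => ?_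
  rw [← sum_add_distrib]
  exact sum_congr rfl fun y _ => by ring

theorem Finset.sum_sum_mul_mul_add_of_sum_eq_one {α β R : Type*} [CommSemiring R]
    {s : Finset α} {t : Finset β} {u : α → R} {v : β → R} (hu : ∑ x ∈ s, u x = 1)
    (hv : ∑ y ∈ t, v y = 1) (f : α → R) (g : β → R) :
    ∑ x ∈ s, ∑ y ∈ t, u x * v y * (f x + g y)
      = ∑ x ∈ s, u x * f x + ∑ y ∈ t, v y * g y := by
  rw [sum_sum_mul_mul_add, hu, hv, one_mul, one_mul]

theorem linear_equilibrium_mean_action {a c Eθ Ed : ℝ} (hc : c ≠ 0) (hden : c - a * Ed ≠ 0) :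
    Eθ / c + a * Ed * Eθ / (c * (c - a * Ed)) = Eθ / (c - a * Ed) := by
  field_simp
  ring

theorem equilibrium_fixed_point_general (a c : ℝ) (Sθ : Finset ℝ) (Sd : Finset ℕ)
    (wθ : ℝ → ℝ) (wd : ℕ → ℝ)
    (hc : 0 < c)
    (hwθ : ∑ θ ∈ Sθ, wθ θ = 1) (hwd : ∑ d ∈ Sd, wd d = 1)
    (hcd : a * (∑ d ∈ Sd, wd d * (d : ℝ)) < c)
    (θi : ℝ) (di : ℕ) :
    θi / c + a * (di : ℝ) * (∑ θ' ∈ Sθ, wθ θ' * θ')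
        / (c * (c - a * (∑ d' ∈ Sd, wd d' * (d' : ℝ))))
    = θi / c + (a * (di : ℝ) / c) *
        (∑ θ' ∈ Sθ, ∑ d' ∈ Sd, wθ θ' * wd d' *
          (θ' / c + a * (d' : ℝ) * (∑ θ'' ∈ Sθ, wθ θ'' * θ'')
            / (c * (c - a * (∑ d'' ∈ Sd, wd d'' * (d'' : ℝ)))))) := by
  set Eθ := ∑ θ ∈ Sθ, wθ θ * θ
  set Ed := ∑ d ∈ Sd, wd d * (d : ℝ)
  have hc' : c ≠ 0 := hc.ne'
  have hden : c - a * Ed ≠ 0 := (sub_pos.2 hcd).ne'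
  have hmean : ∑ θ ∈ Sθ, ∑ d ∈ Sd, wθ θ * wd d * (θ / c + a * (d : ℝ) * Eθ / (c * (c - a * Ed)))
      = Eθ / (c - a * Ed) := by
    have htype : ∑ θ ∈ Sθ, wθ θ * (θ / c) = Eθ / c := by
      rw [sum_div]
      exact sum_congr rfl fun _ _ => mul_div_assoc' ..
    have hdegree : ∑ d ∈ Sd, wd d * (a * (d : ℝ) * Eθ / (c * (c - a * Ed)))
        = a * Ed * Eθ / (c * (c - a * Ed)) := by
      rw [mul_sum, sum_mul, sum_div]
      exact sum_congr rfl fun _ _ => by ring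
    rw [sum_sum_mul_mul_add_of_sum_eq_one hwθ hwd, htype, hdegree,
      linear_equilibrium_mean_action hc' hden]
  rw [hmean]
  field_simp

/-- The equilibrium action function of the linear-quadratic friend game satisfies the
best-response fixed-point equation, where the expectation over a neighbor's type and
degree is taken with respect to independent finite-support marginals. -/
theorem equilibrium_fixed_point (a c : ℝ) (Sθ : Finset ℝ) (Sd : Finset ℕ)
    (wθ : ℝ → ℝ) (wd : ℕ → ℝ)
    (ha : 0 < a) (hc : 0 < c)
    (hwθ : ∑ θ ∈ Sθ, wθ θ = 1) (hwd : ∑ d ∈ Sd, wd d = 1)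
    (hcd : a * (∑ d ∈ Sd, wd d * (d : ℝ)) < c)
    (θi : ℝ) (di : ℕ) :
    θi / c + a * (di : ℝ) * (∑ θ' ∈ Sθ, wθ θ' * θ')
        / (c * (c - a * (∑ d' ∈ Sd, wd d' * (d' : ℝ))))
    = θi / c + (a * (di : ℝ) / c) *
        (∑ θ' ∈ Sθ, ∑ d' ∈ Sd, wθ θ' * wd d' *
          (θ' / c + a * (d' : ℝ) * (∑ θ'' ∈ Sθ, wθ θ'' * θ'')
            / (c * (c - a * (∑ d'' ∈ Sd, wd d'' * (d'' : ℝ)))))) :=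
  equilibrium_fixed_point_general a c Sθ Sd wθ wd hc hwθ hwd hcd θi di
end

section
/- Define x^soc(θ, d) = θ/c + a·d·E[θ]/(c·(c − a·E[d])) and x^friend(θ, d) = θ/c + a·d·E[θ]/(c·(c − a·E[d²]/E[d])). If the degree distribution has positive variance, c > a·E[d²]/E[d], a > 0, d ≥ 1, and E[θ] > 0, then x^friend(θ, d) > x^soc(θ, d) for every type θ and every degree d ≥ 1. -/
/-!
Positive degree variance `E[d²] - E[d]² > 0` is the friendship paradox `E[d] < E[d²]/E[d]`:
a friend's expected degree exceeds one's own. The network term `k / (c (c - a m))` of the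
equilibrium action is strictly increasing in the perceived neighbour degree `m` as long as
`a m < c`, so replacing `E[d]` by `E[d²]/E[d]` strictly raises every action with `k > 0`.
-/

lemma lt_div_of_sq_lt {m s : ℝ} (hm : 0 < m) (h : m ^ 2 < s) : m < s / m :=
  (lt_div_iff₀ hm).mpr (by nlinarith)

lemma div_mul_sub_mul_lt_div_mul_sub_mul {k a c m m' : ℝ} (hk : 0 < k) (ha : 0 < a)
    (hc : 0 < c) (hmm' : m < m') (hm' : a * m' < c) :
    k / (c * (c - a * m)) < k / (c * (c - a * m')) := by
  have hden_pos : 0 < c * (c - a * m') := mul_pos hc (by linarith)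
  have hden_lt : c * (c - a * m') < c * (c - a * m) :=
    mul_lt_mul_of_pos_left (by nlinarith) hc
  exact div_lt_div_of_pos_left hk hden_pos hden_lt

/-- The impact of the friendship paradox on behavior: with positive degree variance,
`x^friend(θ,d) > x^soc(θ,d)` for every type and degree. Here `Ed` and `Ed2` denote
the first and second moments of the degree distribution, and `Eθ` the mean type. -/
theorem friend_action_gt_soc_action (a c Ed Ed2 Eθ θ : ℝ) (d : ℕ)
    (ha : 0 < a) (hEd : 0 < Ed) (hvar : Ed ^ 2 < Ed2)
    (hc : a * (Ed2 / Ed) < c) (hd : 1 ≤ d) (hEθ : 0 < Eθ) :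
    θ / c + a * (d : ℝ) * Eθ / (c * (c - a * (Ed2 / Ed)))
      > θ / c + a * (d : ℝ) * Eθ / (c * (c - a * Ed)) := by
  have hparadox : Ed < Ed2 / Ed := lt_div_of_sq_lt hEd hvar
  have hc_pos : 0 < c := (mul_pos ha (hEd.trans hparadox)).trans hc
  have hk : 0 < a * (d : ℝ) * Eθ := by
    have : (0 : ℝ) < d := by exact_mod_cast hd
    positivity
  exact add_lt_add_right (div_mul_sub_mul_lt_div_mul_sub_mul hk ha hc_pos hparadox hc) _
end

section
/- Fix θ and two degrees d > d'. Then the gap in equilibrium actions is larger under the friend game than the society game: x^friend(θ, d) − x^friend(θ, d') > x^soc(θ, d) − x^soc(θ, d'), where x^friend(θ, d) − x^friend(θ, d') = a·(d − d')·E[θ]/(c·(c − a·E[d²]/E[d])) and x^soc(θ, d) − x^soc(θ, d') = a·(d − d')·E[θ]/(c·(c − a·E[d])). -/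
/-! Both gaps equal `a (d - d') E[θ] / (c (c - a m))`, with `m` the mean degree `E[d]` in the
society game and the mean neighbour degree `E[d²]/E[d]` in the friend game. Positive variance
makes the neighbour degree larger (friendship paradox), and the gap increases with `m`. -/

lemma lt_div_of_sq_lt_s12 {μ ν : ℝ} (hμ : 0 < μ) (h : μ ^ 2 < ν) : μ < ν / μ :=
  (lt_div_iff₀ hμ).2 (by nlinarith)

lemma div_mul_sub_mul_lt_div_mul_sub_mul_s12 {n a c x y : ℝ} (hn : 0 < n) (ha : 0 < a)
    (hc : 0 < c) (hy : a * y < c) (hxy : x < y) :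
    n / (c * (c - a * x)) < n / (c * (c - a * y)) := by
  have hax : a * x < a * y := mul_lt_mul_of_pos_left hxy ha
  exact div_lt_div_of_pos_left hn (mul_pos hc (by linarith))
    (mul_lt_mul_of_pos_left (by linarith) hc)

theorem friend_gap_gt_soc_gap_general (a c Ed Ed2 Eθ θ : ℝ) (d d' : ℕ)
    (ha : 0 < a) (hEd : 0 < Ed) (hvar : Ed ^ 2 < Ed2)
    (hc : a * (Ed2 / Ed) < c) (hEθ : 0 < Eθ) (hdd : d' < d) :
    (θ / c + a * (d : ℝ) * Eθ / (c * (c - a * (Ed2 / Ed))))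
      - (θ / c + a * (d' : ℝ) * Eθ / (c * (c - a * (Ed2 / Ed))))
    > (θ / c + a * (d : ℝ) * Eθ / (c * (c - a * Ed)))
      - (θ / c + a * (d' : ℝ) * Eθ / (c * (c - a * Ed))) := by
  have hneighbour : Ed < Ed2 / Ed := lt_div_of_sq_lt_s12 hEd hvar
  have hc₀ : 0 < c := lt_trans (mul_pos ha (hEd.trans hneighbour)) hc
  have hdd' : (d' : ℝ) < d := by exact_mod_cast hdd
  have hn : 0 < a * ((d : ℝ) - d') * Eθ := mul_pos (mul_pos ha (by linarith)) hEθ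
  have gap : ∀ D, (θ / c + a * (d : ℝ) * Eθ / D) - (θ / c + a * (d' : ℝ) * Eθ / D)
      = a * ((d : ℝ) - d') * Eθ / D := fun D => by ring
  rw [gt_iff_lt, gap, gap]
  exact div_mul_sub_mul_lt_div_mul_sub_mul_s12 hn ha hc₀ hc hneighbour

/-- Increased inequality: the gap in equilibrium actions between a higher and a lower
degree is strictly larger in the friend game than in the society game. -/
theorem friend_gap_gt_soc_gap (a c Ed Ed2 Eθ θ : ℝ) (d d' : ℕ)
    (ha : 0 < a) (hEd : 0 < Ed) (hvar : Ed ^ 2 < Ed2)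
    (hc : a * (Ed2 / Ed) < c) (hEθ : 0 < Eθ) (hd' : 1 ≤ d') (hdd : d' < d) :
    (θ / c + a * (d : ℝ) * Eθ / (c * (c - a * (Ed2 / Ed))))
      - (θ / c + a * (d' : ℝ) * Eθ / (c * (c - a * (Ed2 / Ed))))
    > (θ / c + a * (d : ℝ) * Eθ / (c * (c - a * Ed)))
      - (θ / c + a * (d' : ℝ) * Eθ / (c * (c - a * Ed))) :=
  friend_gap_gt_soc_gap_general a c Ed Ed2 Eθ θ d d' ha hEd hvar hc hEθ hdd
end

section
/- Comparative statics of equilibrium actions: x(θ, d) = θ/c + a·d·Ẽ[θ]/(c·(c − a·m)), viewed as a function of the parameters (a, c, m), is strictly increasing in a, strictly decreasing in c, and strictly increasing in m, on the domain where θ ≥ 0, Ẽ[θ] > 0, d ≥ 1, a > 0, and c > a·m > 0. -/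
section Spillover

variable {𝕜 : Type*} [Field 𝕜] [LinearOrder 𝕜] [IsStrictOrderedRing 𝕜]
  {K a a' c c' m m' : 𝕜}

/-- The network term of the equilibrium action; `K` stands for `d·Ẽ[θ]`. -/
def spillover (K a c m : 𝕜) : 𝕜 := a * K / (c * (c - a * m))

lemma spillover_lt_of_lt_coupling (hK : 0 < K) (ha : 0 < a) (haa' : a < a') (hm : 0 < m)
    (hc : a' * m < c) : spillover K a c m < spillover K a' c m := by
  have ha' : 0 < a' := ha.trans haa'
  have hc₀ : 0 < c := (mul_pos ha' hm).trans hc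
  have hgap' : 0 < c - a' * m := sub_pos.2 hc
  have hgap : 0 < c - a * m := hgap'.trans (by gcongr)
  calc a * K / (c * (c - a * m))
      < a' * K / (c * (c - a * m)) := by gcongr
    _ < a' * K / (c * (c - a' * m)) := by gcongr

lemma spillover_lt_of_lt_cost (hK : 0 < K) (ha : 0 < a) (hm : 0 < m) (hc : a * m < c)
    (hcc' : c < c') : spillover K a c' m < spillover K a c m := by
  have hc₀ : 0 < c := (mul_pos ha hm).trans hc
  have hgap : 0 < c - a * m := sub_pos.2 hc
  unfold spillover
  gcongr

lemma spillover_lt_of_lt_meanDegree (hK : 0 < K) (ha : 0 < a) (hm : 0 < m) (hmm' : m < m')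
    (hc : a * m' < c) : spillover K a c m < spillover K a c m' := by
  have hc₀ : 0 < c := (mul_pos ha (hm.trans hmm')).trans hc
  have hgap' : 0 < c - a * m' := sub_pos.2 hc
  unfold spillover
  gcongr

end Spillover

/-- The equilibrium action, viewed as a function of parameters `(a, c, m)` via
`x(a,c,m) = θ/c + a·d·Ẽ[θ]/(c·(c − a·m))`, is strictly increasing in `a`, strictly
decreasing in `c`, and strictly increasing in `m`, on the domain where `θ ≥ 0`,
`Ẽ[θ] > 0`, `d ≥ 1`, `a > 0`, and `c > a·m > 0`. -/
theorem comparative_statics (θ Eθ : ℝ) (d : ℕ)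
    (hθ : 0 ≤ θ) (hEθ : 0 < Eθ) (hd : 1 ≤ d) :
    (∀ a a' c m : ℝ, 0 < a → a < a' → 0 < m → a' * m < c →
        θ / c + a * (d : ℝ) * Eθ / (c * (c - a * m))
          < θ / c + a' * (d : ℝ) * Eθ / (c * (c - a' * m)))
    ∧ (∀ a c c' m : ℝ, 0 < a → 0 < m → a * m < c → c < c' →
        θ / c' + a * (d : ℝ) * Eθ / (c' * (c' - a * m))
          < θ / c + a * (d : ℝ) * Eθ / (c * (c - a * m)))
    ∧ (∀ a c m m' : ℝ, 0 < a → 0 < m → m < m' → a * m' < c →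
        θ / c + a * (d : ℝ) * Eθ / (c * (c - a * m))
          < θ / c + a * (d : ℝ) * Eθ / (c * (c - a * m'))) := by
  have hK : 0 < (d : ℝ) * Eθ := mul_pos (by exact_mod_cast hd) hEθ
  simp only [mul_assoc _ (d : ℝ) Eθ]
  refine ⟨fun a a' c m ha haa' hm hc => ?_, fun a c c' m ha hm hc hcc' => ?_,
    fun a c m m' ha hm hmm' hc => ?_⟩
  · exact add_lt_add_right (spillover_lt_of_lt_coupling hK ha haa' hm hc) _
  · have hc₀ : 0 < c := (mul_pos ha hm).trans hc
    exact add_lt_add_of_le_of_lt (by gcongr) (spillover_lt_of_lt_cost hK ha hm hc hcc')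
  · exact add_lt_add_right (spillover_lt_of_lt_meanDegree hK ha hm hmm' hc) _
end

section
/- If F₁, F₂ : [0, 1] → [0, 1] are continuous and nonincreasing with F₁(π) ≤ F₂(π) for all π, and π₁*, π₂* are their respective (unique) fixed points, then π₁* ≤ π₂*. Consequently, in the best-shot game, a first-order stochastic dominance increase in the neighbor degree distribution (which pointwise lowers F) weakly lowers the equilibrium probability that a random neighbor provides the public good. -/
open Function

theorem le_of_isFixedPt_of_le_of_antitoneOn {α : Type*} [LinearOrder α] {s : Set α}
    {f g : α → α} (hg : AntitoneOn g s) (hfg : ∀ x ∈ s, f x ≤ g x) {a b : α}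
    (ha : a ∈ s) (hb : b ∈ s) (hfa : IsFixedPt f a) (hgb : IsFixedPt g b) : a ≤ b := by
  by_contra! hba
  have : a ≤ b :=
    calc a = f a := hfa.symm
      _ ≤ g a := hfg a ha
      _ ≤ g b := hg hb ha hba.le
      _ = b := hgb
  exact this.not_gt hba

theorem best_shot_fixed_point_comparison_general (F₁ F₂ : ℝ → ℝ)
    (h2anti : ∀ x ∈ Set.Icc (0 : ℝ) 1, ∀ y ∈ Set.Icc (0 : ℝ) 1, x ≤ y → F₂ y ≤ F₂ x)
    (hle : ∀ x ∈ Set.Icc (0 : ℝ) 1, F₁ x ≤ F₂ x)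
    (π₁ π₂ : ℝ)
    (hπ₁ : π₁ ∈ Set.Icc (0 : ℝ) 1 ∧ F₁ π₁ = π₁)
    (hπ₂ : π₂ ∈ Set.Icc (0 : ℝ) 1 ∧ F₂ π₂ = π₂) :
    π₁ ≤ π₂ :=
  le_of_isFixedPt_of_le_of_antitoneOn (fun x hx y hy hxy => h2anti x hx y hy hxy) hle
    hπ₁.1 hπ₂.1 hπ₁.2 hπ₂.2

/-- If `F₁ ≤ F₂` pointwise on `[0,1]` for two continuous nonincreasing self-maps of
`[0,1]`, then their (unique) fixed points are ordered: `π₁* ≤ π₂*`. -/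
theorem best_shot_fixed_point_comparison (F₁ F₂ : ℝ → ℝ)
    (h1map : ∀ x ∈ Set.Icc (0 : ℝ) 1, F₁ x ∈ Set.Icc (0 : ℝ) 1)
    (h1cont : ContinuousOn F₁ (Set.Icc (0 : ℝ) 1))
    (h1anti : ∀ x ∈ Set.Icc (0 : ℝ) 1, ∀ y ∈ Set.Icc (0 : ℝ) 1, x ≤ y → F₁ y ≤ F₁ x)
    (h2map : ∀ x ∈ Set.Icc (0 : ℝ) 1, F₂ x ∈ Set.Icc (0 : ℝ) 1)
    (h2cont : ContinuousOn F₂ (Set.Icc (0 : ℝ) 1))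
    (h2anti : ∀ x ∈ Set.Icc (0 : ℝ) 1, ∀ y ∈ Set.Icc (0 : ℝ) 1, x ≤ y → F₂ y ≤ F₂ x)
    (hle : ∀ x ∈ Set.Icc (0 : ℝ) 1, F₁ x ≤ F₂ x)
    (π₁ π₂ : ℝ)
    (hπ₁ : π₁ ∈ Set.Icc (0 : ℝ) 1 ∧ F₁ π₁ = π₁)
    (hπ₂ : π₂ ∈ Set.Icc (0 : ℝ) 1 ∧ F₂ π₂ = π₂) :
    π₁ ≤ π₂ :=
  best_shot_fixed_point_comparison_general F₁ F₂ h2anti hle π₁ π₂ hπ₁ hπ₂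
end
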